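/- The function E_0(t) = Σ_{n=1}^∞ (4π²n⁴e^{4t} − 6πn²e^{2t}) e^{−πn²e^{2t}} e^{t/2} is strictly decreasing on (0, ∞). -/

import Mathlib

/-!
With `v = π n² e^{2t}`, every series involved is a combination of the moments
`M_k = ∑ₙ v^k e^{-v}`, and `d/dt` maps `M_k` to `2 (k M_k − M_{k+1})`. This gives
`E₀'(t) = 2 e^{t/2} (yA)(π e^{2t})`. Moreover `E₀ = (Λ'' − Λ/4)/2` with `Λ(t) = e^{t/2} θ(e^{2t})`,
which is even by Jacobi's transformation formula; hence `E₀` is even, `E₀'(0) = 0` and `A(π) = 0`.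
On `[π, 3.2]` the derivative of `yA` is dominated by its `n = 1` term, which is negative, and
beyond `3.2` every term of `yA` is negative. So `A(y) < 0` for `y > π`, i.e. `E₀' < 0` for `t > 0`.
-/

open Real

noncomputable section

section Parity

variable {𝕜 : Type*} [NontriviallyNormedField 𝕜] {F : Type*} [NormedAddCommGroup F]
  [NormedSpace 𝕜 F] {f : 𝕜 → F}

theorem Function.Even.deriv (hf : Function.Even f) : Function.Odd (deriv f) := by
  intro x
  have h := deriv_comp_neg f x
  rw [show (fun x => f (-x)) = f from funext hf] at h
  rw [h, neg_neg]

theorem Function.Odd.deriv (hf : Function.Odd f) : Function.Even (deriv f) := by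
  intro x
  have h := deriv_comp_neg f x
  rw [show (fun x => f (-x)) = fun x => -f x from funext hf, deriv.fun_neg] at h
  exact (neg_inj.1 h).symm

end Parity

def thetaTerm (k : ℕ) (y : ℝ) (n : ℕ) : ℝ := ((n : ℝ) ^ 2 * y) ^ k * exp (-((n : ℝ) ^ 2 * y))

def thetaMoment (k : ℕ) (y : ℝ) : ℝ := ∑' n : ℕ+, thetaTerm k y n

theorem thetaTerm_nonneg (k n : ℕ) {y : ℝ} (hy : 0 ≤ y) : 0 ≤ thetaTerm k y n := by
  unfold thetaTerm; positivity

theorem summable_thetaTerm (k : ℕ) {y : ℝ} (hy : 0 < y) : Summable (thetaTerm k y) := by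
  refine .of_nonneg_of_le (fun n => thetaTerm_nonneg k n hy.le) (fun n => ?_)
    ((summable_pow_mul_exp_neg_nat_mul (2 * k) hy).mul_left (y ^ k))
  have hn : (n : ℝ) ≤ (n : ℝ) ^ 2 := by exact_mod_cast Nat.le_self_pow two_ne_zero n
  calc thetaTerm k y n = y ^ k * ((n : ℝ) ^ (2 * k) * exp (-((n : ℝ) ^ 2 * y))) := by
        unfold thetaTerm; ring
    _ ≤ y ^ k * ((n : ℝ) ^ (2 * k) * exp (-y * n)) := by
        gcongr; nlinarith

theorem hasSum_thetaMoment (k : ℕ) {y : ℝ} (hy : 0 < y) :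
    HasSum (fun n : ℕ+ => thetaTerm k y n) (thetaMoment k y) :=
  ((summable_thetaTerm k hy).comp_injective PNat.coe_injective).hasSum

theorem thetaTerm_le_four_pow_mul (j n : ℕ) {w z : ℝ} (hw : 0 ≤ w) (hwz : w ≤ z)
    (hz : z ≤ 4 * w) : thetaTerm j z n ≤ 4 ^ j * thetaTerm j w n := by
  have hn : (0 : ℝ) ≤ (n : ℝ) ^ 2 := by positivity
  have hpow : ((n : ℝ) ^ 2 * z) ^ j ≤ (4 * ((n : ℝ) ^ 2 * w)) ^ j :=
    pow_le_pow_left₀ (by nlinarith) (by nlinarith) j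
  have hexp : exp (-((n : ℝ) ^ 2 * z)) ≤ exp (-((n : ℝ) ^ 2 * w)) := by gcongr
  calc thetaTerm j z n ≤ (4 * ((n : ℝ) ^ 2 * w)) ^ j * exp (-((n : ℝ) ^ 2 * w)) :=
        mul_le_mul hpow hexp (exp_pos _).le (by positivity)
    _ = 4 ^ j * thetaTerm j w n := by unfold thetaTerm; ring

theorem hasDerivAt_thetaTerm (k n : ℕ) {y : ℝ} (hy : y ≠ 0) :
    HasDerivAt (fun z => thetaTerm k z n)
      ((k * thetaTerm k y n - thetaTerm (k + 1) y n) / y) y := by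
  have hlin : HasDerivAt (fun z => (n : ℝ) ^ 2 * z) ((n : ℝ) ^ 2) y := by
    simpa using (hasDerivAt_id y).const_mul ((n : ℝ) ^ 2)
  refine ((hlin.fun_pow k).fun_mul hlin.fun_neg.exp).congr_deriv ?_
  rcases k with _ | k
  · simp [thetaTerm]; field_simp
  · simp only [thetaTerm, Nat.add_sub_cancel]; field_simp; push_cast; ring

theorem hasDerivAt_thetaMoment (k : ℕ) {y : ℝ} (hy : 0 < y) :
    HasDerivAt (thetaMoment k) ((k * thetaMoment k y - thetaMoment (k + 1) y) / y) y := by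
  have hbound : ∀ (n : ℕ+), ∀ z ∈ Set.Ioo (y / 2) (2 * y),
      ‖(k * thetaTerm k z n - thetaTerm (k + 1) z n) / z‖ ≤
        2 / y * (k * (4 ^ k * thetaTerm k (y / 2) n)
          + 4 ^ (k + 1) * thetaTerm (k + 1) (y / 2) n) := by
    intro n z ⟨hz1, hz2⟩
    have hz : 0 < z := by linarith
    have h1 := thetaTerm_le_four_pow_mul k n (by positivity : 0 ≤ y / 2) hz1.le (by linarith)
    have h2 := thetaTerm_le_four_pow_mul (k + 1) n (by positivity : 0 ≤ y / 2) hz1.le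
      (by linarith)
    have h3 := thetaTerm_nonneg k n hz.le
    have h4 := thetaTerm_nonneg (k + 1) n hz.le
    calc ‖(k * thetaTerm k z n - thetaTerm (k + 1) z n) / z‖
        ≤ (k * thetaTerm k z n + thetaTerm (k + 1) z n) / z := by
          rw [Real.norm_eq_abs, abs_div, abs_of_pos hz]
          gcongr
          exact (abs_sub _ _).trans (by rw [abs_of_nonneg (by positivity), abs_of_nonneg h4])
      _ ≤ (k * thetaTerm k z n + thetaTerm (k + 1) z n) / (y / 2) := by gcongr
      _ = 2 / y * (k * thetaTerm k z n + thetaTerm (k + 1) z n) := by field_simp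
      _ ≤ _ := by gcongr
  have hu : Summable fun n : ℕ+ => 2 / y * (k * (4 ^ k * thetaTerm k (y / 2) n)
      + 4 ^ (k + 1) * thetaTerm (k + 1) (y / 2) n) :=
    (((((hasSum_thetaMoment k (half_pos hy)).mul_left (4 ^ k)).mul_left (k : ℝ)).add
      ((hasSum_thetaMoment (k + 1) (half_pos hy)).mul_left (4 ^ (k + 1)))).mul_left
        (2 / y)).summable
  have hmem : y ∈ Set.Ioo (y / 2) (2 * y) := ⟨by linarith, by linarith⟩
  have h := hasDerivAt_tsum_of_isPreconnected hu isOpen_Ioo isPreconnected_Ioo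
    (fun n z hz => hasDerivAt_thetaTerm k n (by linarith [hz.1] : 0 < z).ne') hbound hmem
    (hasSum_thetaMoment k hy).summable hmem
  rwa [((((hasSum_thetaMoment k hy).mul_left (k : ℝ)).sub
    (hasSum_thetaMoment (k + 1) hy)).div_const y).tsum_eq] at h

def thetaMomentExp (k : ℕ) (t : ℝ) : ℝ := thetaMoment k (π * exp (2 * t))

theorem hasDerivAt_thetaMomentExp (k : ℕ) (t : ℝ) :
    HasDerivAt (thetaMomentExp k)
      (2 * (k * thetaMomentExp k t - thetaMomentExp (k + 1) t)) t := by
  have hy : 0 < π * exp (2 * t) := by positivity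
  have hin : HasDerivAt (fun t => π * exp (2 * t)) (π * (exp (2 * t) * 2)) t := by
    simpa using ((hasDerivAt_id t).const_mul 2).exp.const_mul π
  refine ((hasDerivAt_thetaMoment k hy).comp t hin).congr_deriv ?_
  unfold thetaMomentExp
  field_simp [hy.ne']

theorem tsum_int_exp_neg_mul_sq {c : ℝ} (hc : 0 < c) :
    ∑' n : ℤ, exp (-(c * (n : ℝ) ^ 2)) = 1 + 2 * thetaMoment 0 c := by
  have hnat : Summable fun n : ℕ => exp (-(c * ((n : ℤ) : ℝ) ^ 2)) :=
    (summable_thetaTerm 0 hc).congr (fun n => by simp [thetaTerm, mul_comm])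
  rw [tsum_int_eq_zero_add_two_mul_tsum_pnat (fun n => by simp)
    (hnat.of_nat_of_neg (by simpa using hnat))]
  simp [thetaMoment, thetaTerm, mul_comm]

/-- `e^{t/2} θ(e^{2t})` for Jacobi's `θ(x) = ∑_{n ∈ ℤ} e^{-π n² x}`. -/
def Λ (t : ℝ) : ℝ := exp (t / 2) * (1 + 2 * thetaMomentExp 0 t)

theorem Λ_even : Function.Even Λ := by
  intro t
  have key := Real.tsum_exp_neg_mul_int_sq (exp_pos (2 * t))
  simp only [neg_mul, neg_div] at key
  rw [tsum_int_exp_neg_mul_sq (by positivity), tsum_int_exp_neg_mul_sq (by positivity),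
    ← exp_mul, show π / exp (2 * t) = π * exp (2 * -t) by rw [mul_neg, exp_neg]; ring] at key
  unfold Λ thetaMomentExp
  rw [key, ← mul_assoc, one_div, ← exp_neg, ← exp_add]
  ring_nf

def E0 (t : ℝ) : ℝ :=
  ∑' n : ℕ+, (4 * π ^ 2 * (n : ℝ) ^ 4 * Real.exp (4 * t)
      - 6 * π * (n : ℝ) ^ 2 * Real.exp (2 * t))
    * Real.exp (-(π * (n : ℝ) ^ 2 * Real.exp (2 * t))) * Real.exp (t / 2)

theorem E0_eq (t : ℝ) :
    E0 t = exp (t / 2) * (4 * thetaMomentExp 2 t - 6 * thetaMomentExp 1 t) := by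
  have hy : 0 < π * exp (2 * t) := by positivity
  have hexp : exp (4 * t) = exp (2 * t) ^ 2 := by rw [← exp_nat_mul]; ring_nf
  unfold thetaMomentExp
  rw [← ((((hasSum_thetaMoment 2 hy).mul_left 4).sub
    ((hasSum_thetaMoment 1 hy).mul_left 6)).mul_left (exp (t / 2))).tsum_eq]
  refine tsum_congr fun n => ?_
  simp only [thetaTerm, hexp]
  ring_nf

theorem hasDerivAt_exp_div_two (t : ℝ) :
    HasDerivAt (fun t => exp (t / 2)) (exp (t / 2) / 2) t := by
  simpa [div_eq_mul_inv] using ((hasDerivAt_id t).div_const 2).exp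

theorem hasDerivAt_Λ (t : ℝ) : HasDerivAt Λ
    (exp (t / 2) * ((1 + 2 * thetaMomentExp 0 t) / 2 - 4 * thetaMomentExp 1 t)) t := by
  refine ((hasDerivAt_exp_div_two t).mul
    (((hasDerivAt_thetaMomentExp 0 t).const_mul 2).const_add 1)).congr_deriv ?_
  push_cast
  ring

theorem deriv_Λ : deriv Λ = fun t =>
    exp (t / 2) * ((1 + 2 * thetaMomentExp 0 t) / 2 - 4 * thetaMomentExp 1 t) :=
  funext fun t => (hasDerivAt_Λ t).deriv

theorem deriv_deriv_Λ : deriv (deriv Λ) = fun t =>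
    exp (t / 2) * ((1 + 2 * thetaMomentExp 0 t) / 4 - 12 * thetaMomentExp 1 t
      + 8 * thetaMomentExp 2 t) := by
  refine funext fun t => HasDerivAt.deriv ?_
  rw [deriv_Λ]
  refine ((hasDerivAt_exp_div_two t).mul
    ((((hasDerivAt_thetaMomentExp 0 t).const_mul 2).const_add 1).div_const 2 |>.fun_sub
      ((hasDerivAt_thetaMomentExp 1 t).const_mul 4))).congr_deriv ?_
  push_cast
  ring

theorem E0_eq_deriv_deriv_Λ : E0 = fun t => (deriv (deriv Λ) t - Λ t / 4) / 2 := by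
  funext t
  rw [E0_eq, deriv_deriv_Λ, Λ]
  ring

theorem E0_even : Function.Even E0 := by
  rw [E0_eq_deriv_deriv_Λ]
  intro t
  simp only [Λ_even.deriv.deriv t, Λ_even t]

/-- `y A(y)`, for the function `A` of the paper. -/
def scaledA (y : ℝ) : ℝ :=
  -4 * thetaMoment 3 y + 15 * thetaMoment 2 y - 15 / 2 * thetaMoment 1 y

theorem hasDerivAt_E0 (t : ℝ) :
    HasDerivAt E0 (2 * exp (t / 2) * scaledA (π * exp (2 * t))) t := by
  rw [funext E0_eq]
  refine ((hasDerivAt_exp_div_two t).mul (((hasDerivAt_thetaMomentExp 2 t).const_mul 4).fun_sub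
    ((hasDerivAt_thetaMomentExp 1 t).const_mul 6))).congr_deriv ?_
  unfold scaledA thetaMomentExp
  push_cast
  ring

theorem scaledA_pi : scaledA π = 0 := by
  have h := (hasDerivAt_E0 0).deriv
  rw [E0_even.deriv.map_zero] at h
  simpa using h.symm

theorem hasDerivAt_scaledA {y : ℝ} (hy : 0 < y) :
    HasDerivAt scaledA ((4 * thetaMoment 4 y - 27 * thetaMoment 3 y
      + 75 / 2 * thetaMoment 2 y - 15 / 2 * thetaMoment 1 y) / y) y := by
  refine ((((hasDerivAt_thetaMoment 3 hy).const_mul (-4)).fun_add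
    ((hasDerivAt_thetaMoment 2 hy).const_mul 15)).fun_sub
    ((hasDerivAt_thetaMoment 1 hy).const_mul (15 / 2))).congr_deriv ?_
  push_cast
  ring

theorem exp_neg_three_point_two_gt : (0.0398 : ℝ) < exp (-3.2) := by
  have h1 : (0.3678 : ℝ) < exp (-1) := by
    rw [exp_neg, lt_inv_comm₀ (by norm_num) (exp_pos 1)]
    exact exp_one_lt_d9.trans (by norm_num)
  have h2 : (0.8 : ℝ) ≤ exp (-0.2) := by linarith [add_one_le_exp (-0.2)]
  have h3 : exp (-3.2) = exp (-1) ^ 3 * exp (-0.2) := by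
    rw [← exp_nat_mul, ← exp_add]; norm_num
  have h4 : (0.3678 : ℝ) ^ 3 < exp (-1) ^ 3 := by gcongr
  rw [h3]
  nlinarith

theorem exp_neg_nine_lt : exp (-9) < 1 / 8000 := by
  rw [exp_neg, one_div, inv_lt_inv₀ (exp_pos 9) (by norm_num)]
  have h : exp 9 = exp 1 ^ 9 := by rw [← exp_nat_mul]; norm_num
  rw [h]
  calc (8000 : ℝ) < 2.7182818283 ^ 9 := by norm_num
    _ < exp 1 ^ 9 := by gcongr; exact exp_one_gt_d9

def scaledADerivKernel (v : ℝ) : ℝ :=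
  (4 * v ^ 4 - 27 * v ^ 3 + 75 / 2 * v ^ 2 - 15 / 2 * v) * exp (-v)

theorem scaledADerivKernel_le {v : ℝ} (h1 : 3.14 ≤ v) (h2 : v ≤ 3.2) :
    scaledADerivKernel v ≤ -3.98 := by
  have hp : 4 * v ^ 4 - 27 * v ^ 3 + 75 / 2 * v ^ 2 - 15 / 2 * v ≤ -100 := by
    nlinarith [mul_nonneg (sub_nonneg.2 h1) (sub_nonneg.2 h2), sq_nonneg (v - 3.14)]
  have he : 0.0398 < exp (-v) :=
    exp_neg_three_point_two_gt.trans_le (exp_le_exp.2 (by linarith))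
  unfold scaledADerivKernel
  nlinarith

theorem scaledADerivKernel_le_exp {v : ℝ} (hv : 2 ≤ v) :
    scaledADerivKernel v ≤ 24576 * exp (-(3 / 4 * v)) := by
  have hp : 4 * v ^ 4 - 27 * v ^ 3 + 75 / 2 * v ^ 2 - 15 / 2 * v ≤ 4 * v ^ 4 := by
    nlinarith [mul_nonneg (sub_nonneg.2 hv) (sub_nonneg.2 hv)]
  have hpow : v ^ 4 ≤ 6144 * exp (v / 4) := by
    have := pow_div_factorial_le_exp (v / 4) (by linarith) 4
    norm_num [Nat.factorial] at this
    linarith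
  have hsplit : exp (-(3 / 4 * v)) = exp (v / 4) * exp (-v) := by rw [← exp_add]; ring_nf
  have := exp_pos (-v)
  rw [hsplit]
  unfold scaledADerivKernel
  nlinarith

theorem hasSum_scaledADerivKernel {y : ℝ} (hy : 0 < y) :
    HasSum (fun n : ℕ => scaledADerivKernel (((n + 1 : ℕ) : ℝ) ^ 2 * y))
      (4 * thetaMoment 4 y - 27 * thetaMoment 3 y + 75 / 2 * thetaMoment 2 y
        - 15 / 2 * thetaMoment 1 y) := by
  rw [← hasSum_pnat_iff_hasSum_succ (f := fun n : ℕ => scaledADerivKernel ((n : ℝ) ^ 2 * y))]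
  refine (((((hasSum_thetaMoment 4 hy).mul_left 4).sub
    ((hasSum_thetaMoment 3 hy).mul_left 27)).add ((hasSum_thetaMoment 2 hy).mul_left (75 / 2))).sub
    ((hasSum_thetaMoment 1 hy).mul_left (15 / 2))).congr_fun fun n => ?_
  simp only [scaledADerivKernel, thetaTerm]
  ring

theorem thetaMoment_combination_neg {y : ℝ} (h1 : 3.14 ≤ y) (h2 : y ≤ 3.2) :
    4 * thetaMoment 4 y - 27 * thetaMoment 3 y + 75 / 2 * thetaMoment 2 y
      - 15 / 2 * thetaMoment 1 y < 0 := by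
  have hy : 0 < y := by linarith
  -- The `n = 1` term is below `-3.98`, the others are dominated by `24576 r^(n-1)`.
  set r := exp (-(3 * y))
  have hr : r < 1 / 8000 := (exp_le_exp.2 (by linarith)).trans_lt exp_neg_nine_lt
  have htail := (hasSum_nat_add_iff' 1).2 (hasSum_scaledADerivKernel hy)
  simp only [Finset.range_one, Finset.sum_singleton] at htail
  have hgeom : HasSum (fun m : ℕ => 24576 * r * r ^ m) (24576 * r * (1 - r)⁻¹) :=
    (hasSum_geometric_of_lt_one (exp_pos _).le (by linarith)).mul_left _
  have hle : ∀ m : ℕ, scaledADerivKernel (((m + 1 + 1 : ℕ) : ℝ) ^ 2 * y) ≤ 24576 * r * r ^ m := by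
    intro m
    have hm : (4 : ℝ) * (m + 1) ≤ ((m + 1 + 1 : ℕ) : ℝ) ^ 2 := by
      push_cast; nlinarith [sq_nonneg (m : ℝ)]
    refine (scaledADerivKernel_le_exp (by nlinarith)).trans ?_
    rw [mul_assoc, ← pow_succ', ← exp_nat_mul]
    gcongr
    push_cast at hm ⊢
    nlinarith [mul_le_mul_of_nonneg_right hm hy.le]
  have hfirst : scaledADerivKernel (((0 + 1 : ℕ) : ℝ) ^ 2 * y) ≤ -3.98 := by
    simpa using scaledADerivKernel_le h1 h2
  have htail_le := hasSum_le hle htail hgeom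
  have hgeom_le : 24576 * r * (1 - r)⁻¹ < 3.98 := by
    rw [← div_eq_mul_inv, div_lt_iff₀ (by linarith)]
    nlinarith [exp_pos (-(3 * y))]
  linarith

theorem scaledA_strictAntiOn : StrictAntiOn scaledA (Set.Icc π 3.2) := by
  have hpos : ∀ y ∈ Set.Icc π 3.2, 0 < y := fun y hy => pi_pos.trans_le hy.1
  refine strictAntiOn_of_hasDerivWithinAt_neg (convex_Icc _ _)
    (fun y hy => (hasDerivAt_scaledA (hpos y hy)).continuousAt.continuousWithinAt)
    (fun y hy => (hasDerivAt_scaledA (hpos y (interior_subset hy))).hasDerivWithinAt)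
    fun y hy => ?_
  rw [interior_Icc] at hy
  exact div_neg_of_neg_of_pos
    (thetaMoment_combination_neg (by linarith [pi_gt_d2, hy.1]) hy.2.le) (pi_pos.trans hy.1)

theorem scaledA_neg_of_le {y : ℝ} (hy : 3.2 ≤ y) : scaledA y < 0 := by
  have hterm : ∀ n : ℕ+,
      -4 * thetaTerm 3 y n + 15 * thetaTerm 2 y n - 15 / 2 * thetaTerm 1 y n < 0 := by
    intro n
    have hn : (1 : ℝ) ≤ (n : ℝ) ^ 2 := one_le_pow₀ (Nat.one_le_cast.2 n.pos)
    have hv : 3.2 ≤ (n : ℝ) ^ 2 * y := by nlinarith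
    have hfactor : -4 * thetaTerm 3 y n + 15 * thetaTerm 2 y n - 15 / 2 * thetaTerm 1 y n =
        (n : ℝ) ^ 2 * y * (-4 * ((n : ℝ) ^ 2 * y) ^ 2 + 15 * ((n : ℝ) ^ 2 * y) - 15 / 2)
          * exp (-((n : ℝ) ^ 2 * y)) := by
      simp only [thetaTerm]; ring
    rw [hfactor]
    exact mul_neg_of_neg_of_pos (mul_neg_of_pos_of_neg (by linarith) (by nlinarith)) (exp_pos _)
  have hy0 : 0 < y := by linarith
  have hsum : HasSum (fun n : ℕ+ =>
      -4 * thetaTerm 3 y n + 15 * thetaTerm 2 y n - 15 / 2 * thetaTerm 1 y n) (scaledA y) :=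
    (((hasSum_thetaMoment 3 hy0).mul_left (-4)).add
      ((hasSum_thetaMoment 2 hy0).mul_left 15)).sub ((hasSum_thetaMoment 1 hy0).mul_left (15 / 2))
  exact hasSum_lt (fun n => (hterm n).le) (hterm 1) hsum hasSum_zero

theorem scaledA_neg {y : ℝ} (hy : π < y) : scaledA y < 0 := by
  rcases le_or_gt y 3.2 with h | h
  · rw [← scaledA_pi]
    exact scaledA_strictAntiOn ⟨le_rfl, by linarith [pi_lt_d2]⟩ ⟨hy.le, h⟩ hy
  · exact scaledA_neg_of_le h.le

end

/-- `E₀(t) = Σ_{n=1}^∞ (4π²n⁴e^{4t} − 6πn²e^{2t}) e^{−πn²e^{2t}} e^{t/2}`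
is strictly decreasing on `(0, ∞)`. -/
theorem E0_strictAntiOn :
    StrictAntiOn (fun t : ℝ =>
      ∑' n : ℕ+, (4 * π ^ 2 * (n : ℝ) ^ 4 * Real.exp (4 * t)
          - 6 * π * (n : ℝ) ^ 2 * Real.exp (2 * t))
        * Real.exp (-(π * (n : ℝ) ^ 2 * Real.exp (2 * t))) * Real.exp (t / 2))
      (Set.Ioi 0) := by
  change StrictAntiOn E0 (Set.Ioi 0)
  refine strictAntiOn_of_hasDerivWithinAt_neg (convex_Ioi 0)
    (fun t _ => (hasDerivAt_E0 t).continuousAt.continuousWithinAt)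
    (fun t _ => (hasDerivAt_E0 t).hasDerivWithinAt) fun t ht => ?_
  rw [interior_Ioi] at ht
  have hy : π < π * exp (2 * t) :=
    lt_mul_of_one_lt_right pi_pos (one_lt_exp_iff.2 (by simpa using ht))
  exact mul_neg_of_pos_of_neg (by positivity) (scaledA_neg hy)
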